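/- arXiv:2603.26358 — 6 statements merged into one kernel-verified Lean document; each statement's English description precedes it below -/
import Mathlib

section
/- If P(E[Y|𝒢] ≠ E[Y|ℋ]) > 0 (Granger causality in mean) or P(E[(Y−E[Y|ℋ])²|𝒢] ≠ E[(Y−E[Y|ℋ])²|ℋ]) > 0 (Granger causality in variance), then P(E[(Y−E[Y|𝒢])²|𝒢] ≠ E[(Y−E[Y|ℋ])²|ℋ]) > 0 (simultaneous Granger causality in mean and variance). [Proposition 1] -/
/-!
By the law of total variance, `E[Var(Y | 𝒢)] + Var E[Y | 𝒢] = Var Y = E[Var(Y | ℋ)] + Var E[Y | ℋ]`.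
Applied to `E[Y | ℋ]` and `𝒢`, using `E[E[Y | ℋ] | 𝒢] = E[Y | 𝒢]`, it also gives
`Var E[Y | ℋ] = Var E[Y | 𝒢] + E[(E[Y | ℋ] - E[Y | 𝒢])²]`. Hence if the two conditional variances
agree a.e., then `E[(E[Y | ℋ] - E[Y | 𝒢])²] = 0`, so the conditional means agree a.e., and then
neither Granger causality in mean nor in variance can hold.
-/

open MeasureTheory

namespace ProbabilityTheory

variable {Ω : Type*} {m₀ m m' : MeasurableSpace Ω} {μ : Measure[m₀] Ω} [IsProbabilityMeasure μ]
  {X : Ω → ℝ}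

lemma integral_sq_condExp_sub_condExp_add_variance_condExp (hm : m ≤ m') (hm' : m' ≤ m₀)
    (hX : MemLp X 2 μ) :
    μ[(μ[X | m'] - μ[X | m]) ^ 2] + Var[μ[X | m]; μ] = Var[μ[X | m']; μ] := by
  have hmG : μ[μ[X | m'] | m] =ᵐ[μ] μ[X | m] := condExp_condExp_of_le hm hm'
  rw [← integral_condVar_add_variance_condExp (X := μ[X | m']) (hm.trans hm')
    (hX.condExp one_le_two), variance_congr hmG, condVar, integral_condExp (hm.trans hm')]
  congr 1
  refine integral_congr_ae ?_
  filter_upwards [hmG] with ω hω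
  simp [hω]

lemma condExp_ae_eq_of_integral_condVar_eq (hm : m ≤ m') (hm' : m' ≤ m₀) (hX : MemLp X 2 μ)
    (h : μ[Var[X; μ | m]] = μ[Var[X; μ | m']]) : μ[X | m] =ᵐ[μ] μ[X | m'] := by
  have hvariance : Var[μ[X | m]; μ] = Var[μ[X | m']; μ] := by
    linarith [integral_condVar_add_variance_condExp (hm.trans hm') hX,
      integral_condVar_add_variance_condExp hm' hX]
  have hsq : μ[(μ[X | m'] - μ[X | m]) ^ 2] = 0 := by
    linarith [integral_sq_condExp_sub_condExp_add_variance_condExp hm hm' hX]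
  have hint : Integrable ((μ[X | m'] - μ[X | m]) ^ 2) μ :=
    ((hX.condExp one_le_two).sub (hX.condExp one_le_two)).integrable_sq
  filter_upwards [(integral_eq_zero_iff_of_nonneg (fun ω => sq_nonneg _) hint).1 hsq] with ω hω
  simpa [sub_eq_zero, eq_comm] using hω

end ProbabilityTheory

lemma MeasureTheory.measure_setOf_ne_pos_iff_not_ae_eq {Ω β : Type*} {mΩ : MeasurableSpace Ω}
    {μ : Measure Ω} {f g : Ω → β} : 0 < μ {ω | f ω ≠ g ω} ↔ ¬ f =ᵐ[μ] g := by
  rw [pos_iff_ne_zero, Ne, Filter.EventuallyEq, ae_iff]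

/-- **Proposition 1.** If Granger causality in mean or Granger causality in variance holds,
then simultaneous Granger causality in mean and variance holds. -/
theorem simultaneous_granger_causality_of_mean_or_variance
    {Ω : Type*} {mΩ : MeasurableSpace Ω} (P : Measure Ω) [IsProbabilityMeasure P]
    {G H : MeasurableSpace Ω} (hGH : G ≤ H) (hHF : H ≤ mΩ)
    (Y : Ω → ℝ) (hY : MemLp Y 2 P)
    (hcause :
      0 < P {ω | (P[Y|G]) ω ≠ (P[Y|H]) ω} ∨
      0 < P {ω | (P[(fun ω => (Y ω - (P[Y|H]) ω) ^ 2)|G]) ω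
            ≠ (P[(fun ω => (Y ω - (P[Y|H]) ω) ^ 2)|H]) ω}) :
    0 < P {ω | (P[(fun ω => (Y ω - (P[Y|G]) ω) ^ 2)|G]) ω
          ≠ (P[(fun ω => (Y ω - (P[Y|H]) ω) ^ 2)|H]) ω} := by
  simp only [measure_setOf_ne_pos_iff_not_ae_eq] at hcause ⊢
  -- `hvar` unfolds to `Var[Y; P | G] =ᵐ[P] Var[Y; P | H]`.
  intro hvar
  have hmean : P[Y|G] =ᵐ[P] P[Y|H] :=
    ProbabilityTheory.condExp_ae_eq_of_integral_condVar_eq hGH hHF hY (integral_congr_ae hvar)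
  refine hcause.elim (· hmean) (· ((condExp_congr_ae ?_).trans hvar))
  filter_upwards [hmean] with ω hω
  rw [hω]
end

section
/- If E[(Y − E[Y|𝒢])² | 𝒢] = E[(Y − E[Y|ℋ])² | ℋ] P-almost everywhere, then E[Y|𝒢] = E[Y|ℋ] P-almost everywhere (absence of simultaneous Granger causality implies absence of Granger causality in mean; key step in the proof of Proposition 1). -/
open MeasureTheory

/-! Integrating the hypothesis shows that `Y - E[Y|𝒢]` and `Y - E[Y|ℋ]` have the same `L²` norm.
Since `E[Y|𝒢]` is `ℋ`-measurable and `Y - E[Y|ℋ]` is orthogonal to every `ℋ`-measurable `L²`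
function, Pythagoras gives
`‖Y - E[Y|𝒢]‖² = ‖Y - E[Y|ℋ]‖² + ‖E[Y|ℋ] - E[Y|𝒢]‖²`, so the last term vanishes. -/

section

variable {Ω : Type*} {m m₀ : MeasurableSpace Ω} {μ : Measure Ω} [IsFiniteMeasure μ] {Y Z : Ω → ℝ}

lemma integral_mul_sub_condExp_eq_zero (hm : m ≤ m₀) (hZ : StronglyMeasurable[m] Z)
    (hZ2 : MemLp Z 2 μ) (hY : MemLp Y 2 μ) :
    ∫ ω, Z ω * (Y ω - μ[Y|m] ω) ∂μ = 0 := by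
  have hres : MemLp (Y - μ[Y|m]) 2 μ := hY.sub (hY.condExp one_le_two)
  have hres_condExp : μ[Y - μ[Y|m]|m] =ᵐ[μ] 0 := by
    filter_upwards [condExp_sub (hY.integrable one_le_two) integrable_condExp m] with ω hω
    rw [hω, condExp_of_stronglyMeasurable hm stronglyMeasurable_condExp integrable_condExp]
    exact sub_self _
  refine (integral_condExp hm (f := Z * (Y - μ[Y|m]))).symm.trans (integral_eq_zero_of_ae ?_)
  filter_upwards [condExp_mul_of_stronglyMeasurable_left hZ (hZ2.integrable_mul hres)
    (hres.integrable one_le_two), hres_condExp] with ω hmul hzero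
  simp [hmul, hzero]

lemma integral_sq_sub_eq_integral_sq_sub_condExp_add (hm : m ≤ m₀) (hZ : StronglyMeasurable[m] Z)
    (hZ2 : MemLp Z 2 μ) (hY : MemLp Y 2 μ) :
    ∫ ω, (Y ω - Z ω) ^ 2 ∂μ =
      ∫ ω, (Y ω - μ[Y|m] ω) ^ 2 ∂μ + ∫ ω, (μ[Y|m] ω - Z ω) ^ 2 ∂μ := by
  have hc2 : MemLp (μ[Y|m]) 2 μ := hY.condExp one_le_two
  have hcross : ∫ ω, (μ[Y|m] ω - Z ω) * (Y ω - μ[Y|m] ω) ∂μ = 0 :=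
    integral_mul_sub_condExp_eq_zero hm (stronglyMeasurable_condExp.sub hZ) (hc2.sub hZ2) hY
  have hexpand : ∀ ω, (Y ω - Z ω) ^ 2 = (Y ω - μ[Y|m] ω) ^ 2 + (μ[Y|m] ω - Z ω) ^ 2
      + 2 * ((μ[Y|m] ω - Z ω) * (Y ω - μ[Y|m] ω)) := fun ω => by ring
  have hres_sq : Integrable (fun ω => (Y ω - μ[Y|m] ω) ^ 2) μ := (hY.sub hc2).integrable_sq
  have hgap_sq : Integrable (fun ω => (μ[Y|m] ω - Z ω) ^ 2) μ := (hc2.sub hZ2).integrable_sq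
  have hcross_int : Integrable (fun ω => (μ[Y|m] ω - Z ω) * (Y ω - μ[Y|m] ω)) μ :=
    (hc2.sub hZ2).integrable_mul (hY.sub hc2)
  have hsum : Integrable (fun ω => (Y ω - μ[Y|m] ω) ^ 2 + (μ[Y|m] ω - Z ω) ^ 2) μ :=
    hres_sq.add hgap_sq
  simp_rw [hexpand]
  rw [integral_add hsum (hcross_int.const_mul 2), integral_add hres_sq hgap_sq,
    integral_const_mul, hcross, mul_zero, add_zero]

end

/-- Absence of simultaneous Granger causality implies absence of Granger causality in mean:
if `E[(Y − E[Y|𝒢])² | 𝒢] = E[(Y − E[Y|ℋ])² | ℋ]` a.e., then `E[Y|𝒢] = E[Y|ℋ]` a.e. -/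
theorem condexp_eq_of_condVar_eq
    {Ω : Type*} {mΩ : MeasurableSpace Ω} (P : Measure Ω) [IsProbabilityMeasure P]
    {G H : MeasurableSpace Ω} (hGH : G ≤ H) (hHF : H ≤ mΩ)
    (Y : Ω → ℝ) (hY : MemLp Y 2 P)
    (hvar : P[(fun ω => (Y ω - (P[Y|G]) ω) ^ 2)|G] =ᵐ[P]
      P[(fun ω => (Y ω - (P[Y|H]) ω) ^ 2)|H]) :
    P[Y|G] =ᵐ[P] P[Y|H] := by
  have hpyth := integral_sq_sub_eq_integral_sq_sub_condExp_add hHF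
    (stronglyMeasurable_condExp.mono hGH) (hY.condExp one_le_two) hY
  have hresiduals : ∫ ω, (Y ω - P[Y|G] ω) ^ 2 ∂P = ∫ ω, (Y ω - P[Y|H] ω) ^ 2 ∂P := by
    rw [← integral_condExp (hGH.trans hHF), integral_congr_ae hvar, integral_condExp hHF]
  have hgap : ∫ ω, (P[Y|H] ω - P[Y|G] ω) ^ 2 ∂P = 0 := by linarith
  have hgap_ae : (fun ω => (P[Y|H] ω - P[Y|G] ω) ^ 2) =ᵐ[P] 0 :=
    (integral_eq_zero_iff_of_nonneg (fun ω => sq_nonneg _)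
      ((hY.condExp one_le_two).sub (hY.condExp one_le_two)).integrable_sq).1 hgap
  filter_upwards [hgap_ae] with ω hω
  exact (sub_eq_zero.1 (pow_eq_zero_iff two_ne_zero |>.1 hω)).symm
end

section
/- If E[(Y − E[Y|𝒢])² | 𝒢] = E[(Y − E[Y|ℋ])² | ℋ] P-almost everywhere, then E[(Y − E[Y|ℋ])² | 𝒢] = E[(Y − E[Y|ℋ])² | ℋ] P-almost everywhere (absence of simultaneous Granger causality implies absence of Granger causality in variance; key step in the proof of Proposition 1). -/
open MeasureTheory

/- By hypothesis `E[(Y − E[Y|ℋ])² | ℋ]` agrees a.e. with a `𝒢`-measurable function, and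
conditioning on the coarser `𝒢` fixes such a function; by the tower property the result is also
`E[(Y − E[Y|ℋ])² | 𝒢]`. -/

theorem condExp_ae_eq_condExp_of_aestronglyMeasurable {α E : Type*} [NormedAddCommGroup E]
    [NormedSpace ℝ E] [CompleteSpace E] {m₁ m₂ m₀ : MeasurableSpace α} {μ : Measure α}
    (hm₁₂ : m₁ ≤ m₂) (hm₂ : m₂ ≤ m₀) [SigmaFinite (μ.trim hm₂)]
    [SigmaFinite (μ.trim (hm₁₂.trans hm₂))] {f : α → E}
    (hf : AEStronglyMeasurable[m₁] (μ[f|m₂]) μ) :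
    μ[f|m₁] =ᵐ[μ] μ[f|m₂] :=
  (condExp_condExp_of_le hm₁₂ hm₂).symm.trans
    (condExp_of_aestronglyMeasurable' (hm₁₂.trans hm₂) hf integrable_condExp)

theorem condVar_H_measurable_G_of_condVar_eq_general
    {Ω : Type*} {mΩ : MeasurableSpace Ω} (P : Measure Ω) [IsProbabilityMeasure P]
    {G H : MeasurableSpace Ω} (hGH : G ≤ H) (hHF : H ≤ mΩ)
    (Y : Ω → ℝ)
    (hvar : P[(fun ω => (Y ω - (P[Y|G]) ω) ^ 2)|G] =ᵐ[P]
      P[(fun ω => (Y ω - (P[Y|H]) ω) ^ 2)|H]) :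
    P[(fun ω => (Y ω - (P[Y|H]) ω) ^ 2)|G] =ᵐ[P]
      P[(fun ω => (Y ω - (P[Y|H]) ω) ^ 2)|H] :=
  condExp_ae_eq_condExp_of_aestronglyMeasurable hGH hHF
    (stronglyMeasurable_condExp.aestronglyMeasurable.congr hvar)

/-- Absence of simultaneous Granger causality implies absence of Granger causality in variance:
if `E[(Y − E[Y|𝒢])² | 𝒢] = E[(Y − E[Y|ℋ])² | ℋ]` a.e., then
`E[(Y − E[Y|ℋ])² | 𝒢] = E[(Y − E[Y|ℋ])² | ℋ]` a.e. -/
theorem condVar_H_measurable_G_of_condVar_eq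
    {Ω : Type*} {mΩ : MeasurableSpace Ω} (P : Measure Ω) [IsProbabilityMeasure P]
    {G H : MeasurableSpace Ω} (hGH : G ≤ H) (hHF : H ≤ mΩ)
    (Y : Ω → ℝ) (hY : MemLp Y 2 P)
    (hvar : P[(fun ω => (Y ω - (P[Y|G]) ω) ^ 2)|G] =ᵐ[P]
      P[(fun ω => (Y ω - (P[Y|H]) ω) ^ 2)|H]) :
    P[(fun ω => (Y ω - (P[Y|H]) ω) ^ 2)|G] =ᵐ[P]
      P[(fun ω => (Y ω - (P[Y|H]) ω) ^ 2)|H] :=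
  condVar_H_measurable_G_of_condVar_eq_general P hGH hHF Y hvar
end

section
/- For P-almost every ω, sup_{θ∈Θ} | n⁻¹ Σ_{t=0}^{n−1} Q(θ, T^t ω) − E[Q(θ,·)] | → 0 as n → ∞ (uniform strong law of large numbers for stationary ergodic sequences of continuous random functions, underlying the proof of Theorem 1). -/
open MeasureTheory Filter Topology

/-!
Birkhoff's ergodic theorem comes from the maximal ergodic theorem: if `∫ f < 0`, the set where
the Birkhoff sums of `f` are unbounded above is `T`-invariant, hence null or conull, and conull
would contradict `∫_{sup_N S_N f > 0} f ≥ 0`. Applying this to `f - r` for every `r > ∫ f`, and to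
`-f`, gives the limit.

For uniformity, let `w_δ(ω)` be the modulus of continuity of `θ ↦ Q(θ, ω)` on `Θ` at scale `δ`. It
is dominated by `2 sup_θ |Q(θ, ·)|` and tends to `0` by uniform continuity on the compact `Θ`, so
`E w_δ → 0`. Cover `Θ` by finitely many `δ`-balls: at any `θ` the error is at most the error at the
centre of its ball plus the time average of `w_δ` plus `E w_δ`, and the ergodic theorem for the
finitely many centres and for `w_δ` makes this eventually at most `2 E w_δ + o(1)`.
-/

section Birkhoff

variable {α : Type*} {T : α → α} {f : α → ℝ}

noncomputable def maxBirkhoffSum (T : α → α) (f : α → ℝ) (N : ℕ) : α → ℝ :=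
  (Finset.range (N + 1)).sup' Finset.nonempty_range_add_one (birkhoffSum T f)

lemma maxBirkhoffSum_apply (N : ℕ) (x : α) :
    maxBirkhoffSum T f N x =
      (Finset.range (N + 1)).sup' Finset.nonempty_range_add_one fun n => birkhoffSum T f n x :=
  Finset.sup'_apply _ _ _

lemma birkhoffSum_le_maxBirkhoffSum {n N : ℕ} (h : n ≤ N) (x : α) :
    birkhoffSum T f n x ≤ maxBirkhoffSum T f N x := by
  rw [maxBirkhoffSum_apply]
  exact Finset.le_sup' (fun n => birkhoffSum T f n x) (Finset.mem_range.2 (Nat.lt_succ_of_le h))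

lemma maxBirkhoffSum_nonneg (N : ℕ) (x : α) : 0 ≤ maxBirkhoffSum T f N x := by
  simpa using birkhoffSum_le_maxBirkhoffSum (T := T) (f := f) N.zero_le x

lemma monotone_maxBirkhoffSum (x : α) : Monotone fun N => maxBirkhoffSum T f N x := by
  intro M N hMN
  simp only [maxBirkhoffSum_apply]
  exact Finset.sup'_mono _ (Finset.range_subset_range.2 (by omega)) _

/-- Where the maximum is positive it is attained at some `n ≥ 1`, and
`S_n f = f + S_{n-1} f ∘ T`. -/
lemma maxBirkhoffSum_le_add_comp {N : ℕ} {x : α} (h : 0 < maxBirkhoffSum T f N x) :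
    maxBirkhoffSum T f N x ≤ f x + maxBirkhoffSum T f N (T x) := by
  rw [maxBirkhoffSum_apply] at h ⊢
  obtain ⟨n, hn, hmax⟩ := Finset.exists_mem_eq_sup' Finset.nonempty_range_add_one
    fun n => birkhoffSum T f n x
  rw [hmax] at h ⊢
  obtain ⟨m, rfl⟩ : ∃ m, n = m + 1 :=
    Nat.exists_eq_add_one.2 (Nat.pos_of_ne_zero fun h0 => by simp [h0] at h)
  rw [birkhoffSum_succ']
  gcongr
  exact birkhoffSum_le_maxBirkhoffSum (by simp at hn; omega) _

lemma preimage_setOf_unbounded_birkhoffSum (T : α → α) (f : α → ℝ) :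
    T ⁻¹' {x | ∀ c : ℕ, ∃ n, (c : ℝ) < birkhoffSum T f n x} =
      {x | ∀ c : ℕ, ∃ n, (c : ℝ) < birkhoffSum T f n x} := by
  ext x
  simp only [Set.mem_preimage, Set.mem_ofPred_eq]
  constructor
  · intro h c
    obtain ⟨c', hc'⟩ := exists_nat_ge (c - f x)
    obtain ⟨n, hn⟩ := h c'
    exact ⟨n + 1, by rw [birkhoffSum_succ']; linarith⟩
  · intro h c
    obtain ⟨c', hc'⟩ := exists_nat_ge (c + f x)
    obtain ⟨n, hn⟩ := h c'
    obtain ⟨m, rfl⟩ : ∃ m, n = m + 1 :=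
      Nat.exists_eq_add_one.2 (Nat.pos_of_ne_zero fun h0 =>
        (Nat.cast_nonneg (α := ℝ) c').not_gt (by simpa [h0] using hn))
    exact ⟨m, by rw [birkhoffSum_succ'] at hn; linarith⟩

lemma abs_birkhoffAverage_sub_le {g g' w : α → ℝ}
    (h : ∀ x, |g x - g' x| ≤ w x) (n : ℕ) (x : α) :
    |birkhoffAverage ℝ T g n x - birkhoffAverage ℝ T g' n x| ≤ birkhoffAverage ℝ T w n x := by
  rw [← Pi.sub_apply (birkhoffAverage ℝ T g n), ← Pi.sub_apply (birkhoffAverage ℝ T g),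
    ← birkhoffAverage_sub]
  simp only [birkhoffAverage, birkhoffSum, smul_eq_mul, Pi.sub_apply, abs_mul, abs_inv,
    Nat.abs_cast]
  gcongr
  exact (Finset.abs_sum_le_sum_abs _ _).trans (Finset.sum_le_sum fun k _ => h _)

variable [MeasurableSpace α] {μ : Measure α}

lemma measurable_maxBirkhoffSum (hT : Measurable T) (hf : Measurable f) (N : ℕ) :
    Measurable (maxBirkhoffSum T f N) :=
  Finset.measurable_range_sup' fun _ _ =>
    Finset.measurable_sum _ fun k _ => hf.comp (hT.iterate k)

lemma integrable_maxBirkhoffSum (hT : MeasurePreserving T μ μ) (hf : Integrable f μ) (N : ℕ) :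
    Integrable (maxBirkhoffSum T f N) μ :=
  Finset.sup'_induction (p := (Integrable · μ)) _ _ (fun _ hg _ hh => hg.sup hh) fun _ _ =>
    integrable_finsetSum _ fun k _ => (hT.iterate k).integrable_comp_of_integrable hf

theorem setIntegral_maxBirkhoffSum_pos_nonneg (hT : MeasurePreserving T μ μ) (hfm : Measurable f)
    (hf : Integrable f μ) (N : ℕ) :
    0 ≤ ∫ x in {x | 0 < maxBirkhoffSum T f N x}, f x ∂μ := by
  set M := maxBirkhoffSum T f N
  set A := {x | 0 < M x}
  have hMm : Measurable M := measurable_maxBirkhoffSum hT.measurable hfm N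
  have hM : Integrable M μ := integrable_maxBirkhoffSum hT hf N
  have hMT : Integrable (M ∘ T) μ := hT.integrable_comp_of_integrable hM
  have hint_comp : ∫ x, M (T x) ∂μ = ∫ x, M x ∂μ := by
    rw [← integral_map hT.measurable.aemeasurable
      (by rw [hT.map_eq]; exact hMm.aestronglyMeasurable), hT.map_eq]
  have hint_A : ∫ x in A, M x ∂μ = ∫ x, M x ∂μ :=
    setIntegral_eq_integral_of_forall_compl_eq_zero fun x hx =>
      le_antisymm (not_lt.1 hx) (maxBirkhoffSum_nonneg N x)
  have hint_comp_A : ∫ x in A, M (T x) ∂μ ≤ ∫ x, M (T x) ∂μ :=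
    setIntegral_le_integral hMT (.of_forall fun x => maxBirkhoffSum_nonneg N (T x))
  calc 0 ≤ ∫ x in A, M x ∂μ - ∫ x in A, M (T x) ∂μ := by linarith
    _ = ∫ x in A, (M x - M (T x)) ∂μ := (integral_sub hM.integrableOn hMT.integrableOn).symm
    _ ≤ ∫ x in A, f x ∂μ :=
      setIntegral_mono_on (hM.sub hMT).integrableOn hf.integrableOn
        (measurableSet_lt measurable_const hMm) fun x hx => by
          linarith [maxBirkhoffSum_le_add_comp (T := T) hx]

theorem setIntegral_iUnion_maxBirkhoffSum_pos_nonneg (hT : MeasurePreserving T μ μ)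
    (hfm : Measurable f) (hf : Integrable f μ) :
    0 ≤ ∫ x in ⋃ N, {x | 0 < maxBirkhoffSum T f N x}, f x ∂μ :=
  ge_of_tendsto'
    (tendsto_setIntegral_of_monotone
      (fun N => measurableSet_lt measurable_const (measurable_maxBirkhoffSum hT.measurable hfm N))
      (fun _ _ hMN _ hx => hx.trans_le (monotone_maxBirkhoffSum _ hMN)) hf.integrableOn)
    (setIntegral_maxBirkhoffSum_pos_nonneg hT hfm hf)

theorem measure_setOf_unbounded_birkhoffSum_eq_zero (hT : Ergodic T μ) (hfm : Measurable f)
    (hf : Integrable f μ) (hneg : ∫ x, f x ∂μ < 0) :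
    μ {x | ∀ c : ℕ, ∃ n, (c : ℝ) < birkhoffSum T f n x} = 0 := by
  set U := {x | ∀ c : ℕ, ∃ n, (c : ℝ) < birkhoffSum T f n x}
  have hSm : ∀ n, Measurable (birkhoffSum T f n) := fun n =>
    Finset.measurable_sum _ fun k _ => hfm.comp (hT.measurable.iterate k)
  have hU : MeasurableSet U := by
    simp only [U, Set.ofPred_forall, Set.ofPred_exists]
    exact .iInter fun c => .iUnion fun n => measurableSet_lt measurable_const (hSm n)
  refine (hT.measure_self_or_compl_eq_zero hU
    (preimage_setOf_unbounded_birkhoffSum T f)).resolve_right fun hUc => hneg.not_ge ?_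
  set C := ⋃ N, {x | 0 < maxBirkhoffSum T f N x}
  have hUC : U ⊆ C := fun x hx =>
    let ⟨n, hn⟩ := hx 0
    Set.mem_iUnion.2
      ⟨n, (Nat.cast_zero (R := ℝ) ▸ hn).trans_le (birkhoffSum_le_maxBirkhoffSum le_rfl x)⟩
  have hC : μ.restrict C = μ :=
    Measure.restrict_eq_self_of_ae_mem (measure_mono_null (Set.compl_subset_compl.2 hUC) hUc)
  have := setIntegral_iUnion_maxBirkhoffSum_pos_nonneg hT.toMeasurePreserving hfm hf
  rwa [hC] at this

variable [IsProbabilityMeasure μ]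

theorem ae_eventually_birkhoffAverage_lt (hT : Ergodic T μ) (hfm : Measurable f)
    (hf : Integrable f μ) {r : ℝ} (hr : ∫ x, f x ∂μ < r) :
    ∀ᵐ x ∂μ, ∀ᶠ n in atTop, birkhoffAverage ℝ T f n x < r := by
  obtain ⟨r₀, hfr₀, hr₀⟩ := exists_between hr
  have hnull := measure_setOf_unbounded_birkhoffSum_eq_zero hT (hfm.sub_const r₀)
    (hf.sub (integrable_const r₀)) (by simp [integral_sub hf (integrable_const r₀)]; linarith)
  filter_upwards [measure_eq_zero_iff_ae_notMem.1 hnull] with x hx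
  simp only [not_forall, not_exists, not_lt] at hx
  obtain ⟨c, hc⟩ := hx
  have hlim : Tendsto (fun n : ℕ => r₀ + c / n) atTop (𝓝 r₀) := by
    simpa using tendsto_const_nhds.add (tendsto_const_div_atTop_nhds_zero_nat (c : ℝ))
  filter_upwards [hlim.eventually_lt_const hr₀, eventually_gt_atTop 0] with n hn hpos
  have hsum : birkhoffSum T f n x - n * r₀ ≤ c := by
    simpa [birkhoffSum, Finset.sum_sub_distrib] using hc n
  have hpos' : (0 : ℝ) < n := by exact_mod_cast hpos
  calc birkhoffAverage ℝ T f n x = birkhoffSum T f n x / n := by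
        simp [birkhoffAverage, div_eq_inv_mul]
    _ ≤ r₀ + c / n := by rw [div_le_iff₀ hpos', add_mul, div_mul_cancel₀ _ hpos'.ne']; linarith
    _ < r := hn

theorem ae_tendsto_birkhoffAverage (hT : Ergodic T μ) (hfm : Measurable f) (hf : Integrable f μ) :
    ∀ᵐ x ∂μ, Tendsto (fun n => birkhoffAverage ℝ T f n x) atTop (𝓝 (∫ x, f x ∂μ)) := by
  have upper : ∀ᵐ x ∂μ, ∀ q : ℚ, ∫ x, f x ∂μ < q → ∀ᶠ n in atTop, birkhoffAverage ℝ T f n x < q :=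
    ae_all_iff.2 fun q => eventually_imp_distrib_left.2 (ae_eventually_birkhoffAverage_lt hT hfm hf)
  have lower : ∀ᵐ x ∂μ, ∀ q : ℚ, ∫ x, -f x ∂μ < q →
      ∀ᶠ n in atTop, birkhoffAverage ℝ T (-f) n x < q :=
    ae_all_iff.2 fun q => eventually_imp_distrib_left.2
      (ae_eventually_birkhoffAverage_lt hT hfm.neg hf.neg)
  filter_upwards [upper, lower] with x hup hlow
  refine tendsto_order.2 ⟨fun a ha => ?_, fun a ha => ?_⟩
  · obtain ⟨q, haq, hq⟩ := exists_rat_btwn ha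
    filter_upwards [hlow (-q) (by rw [integral_neg]; push_cast; linarith)] with n hn
    rw [birkhoffAverage_neg, Pi.neg_apply, Pi.neg_apply] at hn
    push_cast at hn
    linarith
  · obtain ⟨q, hq, hqa⟩ := exists_rat_btwn ha
    filter_upwards [hup q hq] with n hn
    exact hn.trans hqa

end Birkhoff

lemma ae_tendsto_zero_of_forall_ae_eventually_le {Ω ι : Type*} [MeasurableSpace Ω] {μ : Measure Ω}
    {l : Filter ι} {s : ι → Ω → ℝ} (hs : ∀ i ω, 0 ≤ s i ω)
    (h : ∀ ε > 0, ∀ᵐ ω ∂μ, ∀ᶠ i in l, s i ω ≤ ε) :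
    ∀ᵐ ω ∂μ, Tendsto (fun i => s i ω) l (𝓝 0) := by
  filter_upwards [ae_all_iff.2 fun k : ℕ => h (1 / (k + 1)) Nat.one_div_pos_of_nat] with ω hω
  refine tendsto_order.2 ⟨fun a ha => .of_forall fun i => ha.trans_le (hs i ω), fun a ha => ?_⟩
  obtain ⟨k, hk⟩ := exists_nat_one_div_lt ha
  exact (hω k).mono fun i hi => hi.trans_lt hk

section UniformErgodic

variable {X Ω : Type*} [PseudoMetricSpace X] {Q : X → Ω → ℝ} {K D : Set X} {δ : ℝ} {ω : Ω}

/-- The supremum runs over a countable dense `D` rather than the whole parameter set so that it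
is measurable in `ω`; by continuity it still bounds every increment on the parameter set. -/
noncomputable def continuityModulus (Q : X → Ω → ℝ) (D : Set X) (δ : ℝ) (ω : Ω) : ℝ :=
  ⨆ p : {p : D × D // dist (p.1 : X) p.2 < δ}, |Q p.1.1 ω - Q p.1.2 ω|

lemma continuityModulus_nonneg : 0 ≤ continuityModulus Q D δ ω :=
  Real.iSup_nonneg fun _ => abs_nonneg _

lemma continuityModulus_le {c : ℝ} (hDK : D ⊆ K) (hc : 0 ≤ c)
    (h : ∀ θ ∈ K, ∀ θ' ∈ K, dist θ θ' < δ → |Q θ ω - Q θ' ω| ≤ c) :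
    continuityModulus Q D δ ω ≤ c :=
  Real.iSup_le (fun p => h _ (hDK p.1.1.2) _ (hDK p.1.2.2) p.2) hc

lemma measurable_continuityModulus [MeasurableSpace Ω] (hD : D.Countable)
    (hQ : ∀ θ, Measurable (Q θ)) : Measurable (continuityModulus Q D δ) :=
  have := hD.to_subtype
  Measurable.iSup fun _ => ((hQ _).sub (hQ _)).abs

lemma exists_mem_dist_lt_abs_sub_lt {f : X → ℝ} {θ : X} (hθ : θ ∈ closure D) (hDK : D ⊆ K)
    (hf : ContinuousWithinAt f K θ) {ε η : ℝ} (hε : 0 < ε) (hη : 0 < η) :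
    ∃ a ∈ D, dist a θ < η ∧ |f a - f θ| < ε := by
  obtain ⟨ρ, hρ, hball⟩ := Metric.continuousWithinAt_iff.1 hf ε hε
  obtain ⟨a, haD, ha⟩ := Metric.mem_closure_iff.1 hθ _ (lt_min hρ hη)
  rw [dist_comm] at ha
  exact ⟨a, haD, ha.trans_le (min_le_right _ _),
    hball (hDK haD) (ha.trans_le (min_le_left _ _))⟩

lemma abs_sub_le_continuityModulus {B : ℝ} (hDK : D ⊆ K) (hKD : K ⊆ closure D)
    (hQ : ContinuousOn (fun θ => Q θ ω) K) (hB : ∀ θ ∈ K, |Q θ ω| ≤ B)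
    {θ θ' : X} (hθ : θ ∈ K) (hθ' : θ' ∈ K) (hδ : dist θ θ' < δ) :
    |Q θ ω - Q θ' ω| ≤ continuityModulus Q D δ ω := by
  have hbdd : BddAbove (Set.range fun p : {p : D × D // dist (p.1 : X) p.2 < δ} =>
      |Q p.1.1 ω - Q p.1.2 ω|) := by
    refine ⟨B + B, ?_⟩
    rintro _ ⟨p, rfl⟩
    exact (abs_sub _ _).trans (add_le_add (hB _ (hDK p.1.1.2)) (hB _ (hDK p.1.2.2)))
  refine le_of_forall_pos_le_add fun ε hε => ?_
  have hη : 0 < (δ - dist θ θ') / 2 := by linarith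
  obtain ⟨a, haD, ha, hQa⟩ :=
    exists_mem_dist_lt_abs_sub_lt (hKD hθ) hDK (hQ θ hθ) (half_pos hε) hη
  obtain ⟨a', ha'D, ha', hQa'⟩ :=
    exists_mem_dist_lt_abs_sub_lt (hKD hθ') hDK (hQ θ' hθ') (half_pos hε) hη
  have hdist : dist a a' < δ := by
    linarith [dist_triangle4 a θ θ' a', dist_comm a' θ']
  have hmod : |Q a ω - Q a' ω| ≤ continuityModulus Q D δ ω :=
    le_ciSup hbdd (⟨(⟨a, haD⟩, ⟨a', ha'D⟩), hdist⟩ : {p : D × D // dist (p.1 : X) p.2 < δ})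
  rw [abs_sub_comm] at hQa
  calc |Q θ ω - Q θ' ω| ≤ |Q θ ω - Q a ω| + (|Q a ω - Q a' ω| + |Q a' ω - Q θ' ω|) :=
        (abs_sub_le _ _ _).trans (add_le_add_right (abs_sub_le _ _ _) _)
    _ ≤ ε / 2 + (continuityModulus Q D δ ω + ε / 2) := by gcongr
    _ = continuityModulus Q D δ ω + ε := by ring

lemma IsCompact.le_iSup_of_continuousOn {f : X → ℝ} (hK : IsCompact K) (hf : ContinuousOn f K)
    {θ : X} (hθ : θ ∈ K) : f θ ≤ ⨆ θ : K, f θ :=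
  le_ciSup (f := fun θ : K => f θ) (by simpa only [Set.image_eq_range] using hK.bddAbove_image hf)
    ⟨θ, hθ⟩

lemma continuityModulus_le_two_mul_iSup (hK : IsCompact K) (hDK : D ⊆ K)
    (hQ : ContinuousOn (fun θ => Q θ ω) K) :
    continuityModulus Q D δ ω ≤ 2 * ⨆ θ : K, |Q θ ω| :=
  continuityModulus_le hDK (mul_nonneg zero_le_two (Real.iSup_nonneg fun _ => abs_nonneg _))
    fun θ hθ θ' hθ' _ => by
      linarith [abs_sub (Q θ ω) (Q θ' ω), hK.le_iSup_of_continuousOn hQ.abs hθ,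
        hK.le_iSup_of_continuousOn hQ.abs hθ']

variable [MeasurableSpace Ω] {μ : Measure Ω}

theorem tendsto_integral_continuityModulus (hK : IsCompact K) (hDK : D ⊆ K) (hD : D.Countable)
    (hQm : ∀ θ, Measurable (Q θ)) (hQc : ∀ ω, ContinuousOn (fun θ => Q θ ω) K)
    (hF : Integrable (fun ω => ⨆ θ : K, |Q θ ω|) μ) :
    Tendsto (fun δ => ∫ ω, continuityModulus Q D δ ω ∂μ) (𝓝[>] 0) (𝓝 0) := by
  have hpt : ∀ ω, Tendsto (fun δ => continuityModulus Q D δ ω) (𝓝[>] 0) (𝓝 0) := fun ω => by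
    refine Metric.tendsto_nhds.2 fun ε hε => ?_
    obtain ⟨η, hη, hunif⟩ := Metric.uniformContinuousOn_iff.1
      (hK.uniformContinuousOn_of_continuous (hQc ω)) (ε / 2) (half_pos hε)
    filter_upwards [Ioo_mem_nhdsGT hη] with δ hδ
    have := continuityModulus_le hDK (half_pos hε).le fun θ hθ θ' hθ' h =>
      (hunif θ hθ θ' hθ' (h.trans hδ.2)).le
    rw [Real.dist_eq, sub_zero, abs_of_nonneg continuityModulus_nonneg]
    linarith
  simpa using tendsto_integral_filter_of_dominated_convergence _
    (.of_forall fun δ => (measurable_continuityModulus hD hQm).aestronglyMeasurable)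
    (.of_forall fun δ => .of_forall fun ω => by
      rw [Real.norm_of_nonneg continuityModulus_nonneg]
      exact continuityModulus_le_two_mul_iSup hK hDK (hQc ω))
    (hF.const_mul 2) (.of_forall hpt)

theorem ae_eventually_iSup_abs_birkhoffAverage_sub_integral_le [IsProbabilityMeasure μ]
    {T : Ω → Ω} (hT : Ergodic T μ) (hK : IsCompact K) (hQm : ∀ θ, Measurable (Q θ))
    (hQc : ∀ ω, ContinuousOn (fun θ => Q θ ω) K)
    (hF : Integrable (fun ω => ⨆ θ : K, |Q θ ω|) μ) {ε : ℝ} (hε : 0 < ε) :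
    ∀ᵐ ω ∂μ, ∀ᶠ n in atTop,
      ⨆ θ : K, |birkhoffAverage ℝ T (Q θ) n ω - ∫ x, Q θ x ∂μ| ≤ ε := by
  obtain ⟨D, hDK, hD, hKD⟩ := hK.isSeparable.exists_countable_dense_subset
  have hQF : ∀ ω, ∀ θ ∈ K, |Q θ ω| ≤ ⨆ θ : K, |Q θ ω| := fun ω θ hθ =>
    hK.le_iSup_of_continuousOn (hQc ω).abs hθ
  have hQi : ∀ θ ∈ K, Integrable (Q θ) μ := fun θ hθ =>
    hF.mono' (hQm θ).aestronglyMeasurable (.of_forall fun ω => hQF ω θ hθ)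
  obtain ⟨δ, hwδ, hδ⟩ := (((tendsto_integral_continuityModulus hK hDK hD hQm hQc hF).eventually
    (gt_mem_nhds (by positivity : (0 : ℝ) < ε / 4))).and self_mem_nhdsWithin).exists
  set w := continuityModulus Q D δ
  have hwm : Measurable w := measurable_continuityModulus hD hQm
  have hwi : Integrable w μ := (hF.const_mul 2).mono' hwm.aestronglyMeasurable
    (.of_forall fun ω => by
      rw [Real.norm_of_nonneg continuityModulus_nonneg]
      exact continuityModulus_le_two_mul_iSup hK hDK (hQc ω))
  obtain ⟨t, htK, ht, hcover⟩ := finite_cover_balls_of_compact hK hδ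
  have hnet : ∀ᵐ ω ∂μ, ∀ θ₀ ∈ t, Tendsto (fun n => birkhoffAverage ℝ T (Q θ₀) n ω) atTop
      (𝓝 (∫ x, Q θ₀ x ∂μ)) :=
    (ae_ball_iff ht.countable).2 fun θ₀ hθ₀ =>
      ae_tendsto_birkhoffAverage hT (hQm θ₀) (hQi θ₀ (htK hθ₀))
  filter_upwards [hnet, ae_tendsto_birkhoffAverage hT hwm hwi] with ω hnet hw
  have hclose : ∀ᶠ n in atTop, ∀ θ₀ ∈ t,
      |birkhoffAverage ℝ T (Q θ₀) n ω - ∫ x, Q θ₀ x ∂μ| < ε / 4 :=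
    (eventually_all_finite ht).2 fun θ₀ hθ₀ => by
      simpa only [Real.dist_eq] using Metric.tendsto_nhds.1 (hnet θ₀ hθ₀) _ (by positivity)
  filter_upwards [hclose,
    hw.eventually_lt_const (lt_add_of_pos_right _ (by positivity : 0 < ε / 4))] with n hn hwn
  refine Real.iSup_le (fun ⟨θ, hθ⟩ => ?_) hε.le
  obtain ⟨θ₀, hθ₀, hθθ₀⟩ := Set.mem_iUnion₂.1 (hcover hθ)
  have hinc : ∀ x, |Q θ x - Q θ₀ x| ≤ w x := fun x =>
    abs_sub_le_continuityModulus hDK hKD (hQc x) (hQF x) hθ (htK hθ₀) hθθ₀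
  have hint : |∫ x, Q θ₀ x ∂μ - ∫ x, Q θ x ∂μ| ≤ ∫ x, w x ∂μ := by
    rw [← integral_sub (hQi θ₀ (htK hθ₀)) (hQi θ hθ)]
    exact abs_integral_le_integral_abs.trans
      (integral_mono ((hQi θ₀ (htK hθ₀)).sub (hQi θ hθ)).abs hwi fun x => by
        rw [abs_sub_comm]; exact hinc x)
  calc |birkhoffAverage ℝ T (Q θ) n ω - ∫ x, Q θ x ∂μ|
      ≤ |birkhoffAverage ℝ T (Q θ) n ω - birkhoffAverage ℝ T (Q θ₀) n ω|
        + (|birkhoffAverage ℝ T (Q θ₀) n ω - ∫ x, Q θ₀ x ∂μ|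
          + |∫ x, Q θ₀ x ∂μ - ∫ x, Q θ x ∂μ|) :=
      (abs_sub_le _ _ _).trans (add_le_add_right (abs_sub_le _ _ _) _)
    _ ≤ birkhoffAverage ℝ T w n ω + (ε / 4 + ∫ x, w x ∂μ) :=
      add_le_add (abs_birkhoffAverage_sub_le hinc n ω) (add_le_add (hn θ₀ hθ₀).le hint)
    _ ≤ ε := by linarith

end UniformErgodic

/-- Uniform strong law of large numbers for stationary ergodic sequences of continuous
random functions (underlying the proof of Theorem 1): for P-almost every `ω`,
`sup_{θ∈Θ} | n⁻¹ Σ_{t=0}^{n−1} Q(θ, T^t ω) − E[Q(θ,·)] | → 0` as `n → ∞`. -/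
theorem uniform_slln
    {Ω : Type*} {mΩ : MeasurableSpace Ω} (P : Measure Ω) [IsProbabilityMeasure P]
    (T : Ω → Ω) (hT : Ergodic T P)
    {d : ℕ} (Θ : Set (Fin d → ℝ)) (hΘcompact : IsCompact Θ)
    (Q : (Fin d → ℝ) → Ω → ℝ)
    (hQmeas : ∀ θ, Measurable (Q θ))
    (hQcont : ∀ ω, ContinuousOn (fun θ => Q θ ω) Θ)
    (hC1 : Integrable (fun ω => ⨆ θ : Θ, |Q (θ : Fin d → ℝ) ω|) P) :
    ∀ᵐ ω ∂P, Tendsto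
      (fun n : ℕ => ⨆ θ : Θ,
        |(n : ℝ)⁻¹ * ∑ t ∈ Finset.range n, Q (θ : Fin d → ℝ) (T^[t] ω)
          - ∫ x, Q (θ : Fin d → ℝ) x ∂P|)
      atTop (nhds 0) :=
  ae_tendsto_zero_of_forall_ae_eventually_le (fun _ _ => Real.iSup_nonneg fun _ => abs_nonneg _)
    fun _ hε => ae_eventually_iSup_abs_birkhoffAverage_sub_integral_le hT hΘcompact hQmeas hQcont
      hC1 hε
end

section
/- For every 𝓕₀-measurable random variable μ : Ω → (0,∞) such that Y·log μ, μ, Y·log μ₀ and μ₀ are all integrable, E[Y log μ − μ] ≤ E[Y log μ₀ − μ₀], with equality if and only if μ = μ₀ P-almost everywhere. (Unique maximization of the Poisson-type quasi-likelihood at the true conditional mean; core of the verification of Assumption C2 for Q₂ in Proposition 3.) -/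
/-!
Conditioning on `F0` pulls the `F0`-measurable factor `log ν` out of `E[Y log ν]`, so
`E[Y log ν - ν] = E[μ₀ log ν - ν]`. Pointwise, `a log b - b ≤ a log a - a` for `a, b > 0`, the gap
being `b · klFun (a / b)`, which vanishes only at `b = a`. Integrating the nonnegative gap gives the
inequality, and since a nonnegative integrable function with zero integral vanishes a.e., also the
equality case.
-/

open MeasureTheory Real InformationTheory

noncomputable def poissonQuasiLogLik (y x : ℝ) : ℝ := y * log x - x

section Pointwise

variable {a b : ℝ}

lemma poissonQuasiLogLik_sub_eq_mul_klFun (ha : 0 < a) (hb : 0 < b) :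
    poissonQuasiLogLik a a - poissonQuasiLogLik a b = b * klFun (a / b) := by
  rw [klFun_apply, log_div ha.ne' hb.ne', poissonQuasiLogLik, poissonQuasiLogLik]
  field_simp
  ring

lemma poissonQuasiLogLik_le (ha : 0 < a) (hb : 0 < b) :
    poissonQuasiLogLik a b ≤ poissonQuasiLogLik a a :=
  sub_nonneg.mp <| poissonQuasiLogLik_sub_eq_mul_klFun ha hb ▸
    mul_nonneg hb.le (klFun_nonneg (div_pos ha hb).le)

lemma poissonQuasiLogLik_eq_iff (ha : 0 < a) (hb : 0 < b) :
    poissonQuasiLogLik a b = poissonQuasiLogLik a a ↔ b = a := by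
  rw [eq_comm, ← sub_eq_zero, poissonQuasiLogLik_sub_eq_mul_klFun ha hb,
    mul_eq_zero_iff_left hb.ne', klFun_eq_zero_iff (div_pos ha hb).le, div_eq_one_iff_eq hb.ne',
    eq_comm]

end Pointwise

section PullOut

variable {Ω : Type*} {m mΩ : MeasurableSpace Ω} {μ : Measure Ω} {f g : Ω → ℝ}

lemma integrable_condExp_mul (hg : AEStronglyMeasurable[m] g μ) (hfg : Integrable (f * g) μ)
    (hf : Integrable f μ) : Integrable (μ[f|m] * g) μ :=
  integrable_condExp.congr (condExp_mul_of_aestronglyMeasurable_right hg hfg hf)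

lemma integral_condExp_mul (hm : m ≤ mΩ) [SigmaFinite (μ.trim hm)]
    (hg : AEStronglyMeasurable[m] g μ) (hfg : Integrable (f * g) μ) (hf : Integrable f μ) :
    ∫ ω, μ[f|m] ω * g ω ∂μ = ∫ ω, f ω * g ω ∂μ :=
  (integral_congr_ae (condExp_mul_of_aestronglyMeasurable_right hg hfg hf)).symm.trans
    (integral_condExp hm)

end PullOut

section ConditionalMean

variable {Ω : Type*} {m mΩ : MeasurableSpace Ω} {P : Measure Ω} {Y μ₀ ν : Ω → ℝ}

lemma integrable_poissonQuasiLogLik_of_ae_eq_condExp (hY : Integrable Y P)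
    (hμ₀ : μ₀ =ᵐ[P] P[Y|m]) (hν : Measurable[m] ν)
    (hYν : Integrable (fun ω => Y ω * log (ν ω)) P) (hν_int : Integrable ν P) :
    Integrable (fun ω => poissonQuasiLogLik (μ₀ ω) (ν ω)) P :=
  ((integrable_condExp_mul hν.log.aestronglyMeasurable hYν hY).congr
    (hμ₀.symm.mul .rfl)).sub hν_int

lemma integral_poissonQuasiLogLik_of_ae_eq_condExp (hm : m ≤ mΩ) [SigmaFinite (P.trim hm)]
    (hY : Integrable Y P) (hμ₀ : μ₀ =ᵐ[P] P[Y|m]) (hν : Measurable[m] ν)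
    (hYν : Integrable (fun ω => Y ω * log (ν ω)) P) (hν_int : Integrable ν P) :
    ∫ ω, poissonQuasiLogLik (Y ω) (ν ω) ∂P = ∫ ω, poissonQuasiLogLik (μ₀ ω) (ν ω) ∂P := by
  have hlog : AEStronglyMeasurable[m] (fun ω => log (ν ω)) P := hν.log.aestronglyMeasurable
  have hμ₀ν : Integrable (fun ω => μ₀ ω * log (ν ω)) P :=
    (integrable_condExp_mul hlog hYν hY).congr (hμ₀.symm.mul .rfl)
  simp only [poissonQuasiLogLik]
  rw [integral_sub hYν hν_int, integral_sub hμ₀ν hν_int, ← integral_condExp_mul hm hlog hYν hY]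
  exact congrArg (· - _) (integral_congr_ae (hμ₀.symm.mul .rfl))

end ConditionalMean

theorem poisson_quasiLik_unique_max_general
    {Ω : Type*} {mF : MeasurableSpace Ω} (P : Measure Ω) [IsProbabilityMeasure P]
    (F0 : MeasurableSpace Ω) (hF0 : F0 ≤ mF)
    (Y : Ω → ℝ) (hYint : Integrable Y P)
    (μ0 : Ω → ℝ) (hμ0meas : Measurable[F0] μ0) (hμ0 : μ0 =ᵐ[P] P[Y|F0])
    (hμ0pos : ∀ᵐ ω ∂P, 0 < μ0 ω)
    (hμ0int1 : Integrable (fun ω => Y ω * Real.log (μ0 ω)) P)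
    (hμ0int2 : Integrable μ0 P)
    (μ : Ω → ℝ) (hμmeas : Measurable[F0] μ) (hμpos : ∀ ω, 0 < μ ω)
    (hμint1 : Integrable (fun ω => Y ω * Real.log (μ ω)) P)
    (hμint2 : Integrable μ P) :
    (∫ ω, (Y ω * Real.log (μ ω) - μ ω) ∂P ≤ ∫ ω, (Y ω * Real.log (μ0 ω) - μ0 ω) ∂P) ∧
    ((∫ ω, (Y ω * Real.log (μ ω) - μ ω) ∂P = ∫ ω, (Y ω * Real.log (μ0 ω) - μ0 ω) ∂P) ↔
      μ =ᵐ[P] μ0) := by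
  change ∫ ω, poissonQuasiLogLik (Y ω) (μ ω) ∂P ≤ ∫ ω, poissonQuasiLogLik (Y ω) (μ0 ω) ∂P ∧
    (∫ ω, poissonQuasiLogLik (Y ω) (μ ω) ∂P = ∫ ω, poissonQuasiLogLik (Y ω) (μ0 ω) ∂P ↔ _)
  have hint := integrable_poissonQuasiLogLik_of_ae_eq_condExp hYint hμ0 hμmeas hμint1 hμint2
  have hint0 := integrable_poissonQuasiLogLik_of_ae_eq_condExp hYint hμ0 hμ0meas hμ0int1 hμ0int2
  have hle : (fun ω => poissonQuasiLogLik (μ0 ω) (μ ω)) ≤ᵐ[P]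
      fun ω => poissonQuasiLogLik (μ0 ω) (μ0 ω) :=
    hμ0pos.mono fun ω h => poissonQuasiLogLik_le h (hμpos ω)
  rw [integral_poissonQuasiLogLik_of_ae_eq_condExp hF0 hYint hμ0 hμmeas hμint1 hμint2,
    integral_poissonQuasiLogLik_of_ae_eq_condExp hF0 hYint hμ0 hμ0meas hμ0int1 hμ0int2,
    integral_eq_iff_of_ae_le hint hint0 hle]
  exact ⟨integral_mono_ae hint hint0 hle,
    Filter.eventually_congr (hμ0pos.mono fun ω h => poissonQuasiLogLik_eq_iff h (hμpos ω))⟩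

/-- Unique maximization of the Poisson-type quasi-likelihood at the true conditional mean
(core of the verification of Assumption C2 for `Q₂` in Proposition 3): for every
`𝓕₀`-measurable `μ : Ω → (0,∞)` with the stated integrability,
`E[Y log μ − μ] ≤ E[Y log μ₀ − μ₀]`, with equality iff `μ = μ₀` P-a.e. -/
theorem poisson_quasiLik_unique_max
    {Ω : Type*} {mF : MeasurableSpace Ω} (P : Measure Ω) [IsProbabilityMeasure P]
    (F0 : MeasurableSpace Ω) (hF0 : F0 ≤ mF)
    (Y : Ω → ℝ) (hYnonneg : ∀ ω, 0 ≤ Y ω) (hYint : Integrable Y P)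
    (μ0 : Ω → ℝ) (hμ0meas : Measurable[F0] μ0) (hμ0 : μ0 =ᵐ[P] P[Y|F0])
    (hμ0pos : ∀ᵐ ω ∂P, 0 < μ0 ω)
    (hμ0int1 : Integrable (fun ω => Y ω * Real.log (μ0 ω)) P)
    (hμ0int2 : Integrable μ0 P)
    (μ : Ω → ℝ) (hμmeas : Measurable[F0] μ) (hμpos : ∀ ω, 0 < μ ω)
    (hμint1 : Integrable (fun ω => Y ω * Real.log (μ ω)) P)
    (hμint2 : Integrable μ P) :
    (∫ ω, (Y ω * Real.log (μ ω) - μ ω) ∂P ≤ ∫ ω, (Y ω * Real.log (μ0 ω) - μ0 ω) ∂P) ∧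
    ((∫ ω, (Y ω * Real.log (μ ω) - μ ω) ∂P = ∫ ω, (Y ω * Real.log (μ0 ω) - μ0 ω) ∂P) ↔
      μ =ᵐ[P] μ0) :=
  poisson_quasiLik_unique_max_general P F0 hF0 Y hYint μ0 hμ0meas hμ0 hμ0pos hμ0int1 hμ0int2 μ
    hμmeas hμpos hμint1 hμint2
end

section
/- Assume Θ is compact (Assumption B1) and the moment conditions E[Y_{2,t}²] < ∞, E[Y_{2,t} Y_{2,t−i}] < ∞ for i = 1,…,p, E[|T₁(Y_{1,t})|] < ∞, E[Y_{2,t} |T₁(Y_{1,t−l})|] < ∞ for l = 1,…,k, and E[sup_{θ⁽²⁾∈Θ₂} exp(ν_{2,t}(θ⁽²⁾))] < ∞ hold. Then E[ sup_{θ∈Θ} | Q_{1,t}(θ⁽¹⁾) + Q_{2,t}(θ⁽²⁾) | ] < ∞, i.e. Assumption C1 holds for the beta/double-Poisson quasi-likelihoods. [Proposition 3, C1 part, with the required moment conditions made explicit] -/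
open MeasureTheory Filter

noncomputable section

namespace MixTSQL

variable {Ω : Type*}

/-- `T₁(y) = log(y/(1−y))`. -/
def T1 (y : ℝ) : ℝ := Real.log (y / (1 - y))

/-- `T₂(y) = log(1+y)`. -/
def T2 (y : ℝ) : ℝ := Real.log (1 + y)

/-- Regressor vector `(1, T₁(Y_{1,τ−1}),…,T₁(Y_{1,τ−r}), T₂(Y_{2,τ−1}),…,T₂(Y_{2,τ−s}))`
entering the linear predictor `ν_{1,τ}`. -/
def X1 (Y1 Y2 : ℤ → Ω → ℝ) (r s : ℕ) (τ : ℤ) (ω : Ω) : Fin (r + s + 1) → ℝ :=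
  Fin.cons 1 (Fin.append (fun i : Fin r => T1 (Y1 (τ - 1 - (i.val : ℤ)) ω))
    (fun l : Fin s => T2 (Y2 (τ - 1 - (l.val : ℤ)) ω)))

/-- Regressor vector `(1, T₂(Y_{2,τ−1}),…,T₂(Y_{2,τ−p}), T₁(Y_{1,τ−1}),…,T₁(Y_{1,τ−k}))`
entering the linear predictor `ν_{2,τ}`. -/
def X2 (Y1 Y2 : ℤ → Ω → ℝ) (p k : ℕ) (τ : ℤ) (ω : Ω) : Fin (p + k + 1) → ℝ :=
  Fin.cons 1 (Fin.append (fun i : Fin p => T2 (Y2 (τ - 1 - (i.val : ℤ)) ω))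
    (fun l : Fin k => T1 (Y1 (τ - 1 - (l.val : ℤ)) ω)))

/-- Linear predictor `ν_{1,τ}(θ⁽¹⁾) = β₀⁽¹⁾ + Σ β_i⁽¹⁾ T₁(Y_{1,τ−i}) + Σ γ_l⁽¹⁾ T₂(Y_{2,τ−l})`. -/
def nu1 (Y1 Y2 : ℤ → Ω → ℝ) (r s : ℕ) (θ1 : Fin (r + s + 1) → ℝ) (τ : ℤ) (ω : Ω) : ℝ :=
  ∑ j, θ1 j * X1 Y1 Y2 r s τ ω j

/-- Linear predictor `ν_{2,τ}(θ⁽²⁾) = β₀⁽²⁾ + Σ β_i⁽²⁾ T₂(Y_{2,τ−i}) + Σ γ_l⁽²⁾ T₁(Y_{1,τ−l})`. -/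
def nu2 (Y1 Y2 : ℤ → Ω → ℝ) (p k : ℕ) (θ2 : Fin (p + k + 1) → ℝ) (τ : ℤ) (ω : Ω) : ℝ :=
  ∑ j, θ2 j * X2 Y1 Y2 p k τ ω j

/-- Conditional mean `μ_{1,τ}(θ⁽¹⁾) = e^{ν_{1,τ}}/(1+e^{ν_{1,τ}})` (logit link). -/
def mu1 (Y1 Y2 : ℤ → Ω → ℝ) (r s : ℕ) (θ1 : Fin (r + s + 1) → ℝ) (τ : ℤ) (ω : Ω) : ℝ :=
  Real.exp (nu1 Y1 Y2 r s θ1 τ ω) / (1 + Real.exp (nu1 Y1 Y2 r s θ1 τ ω))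

/-- Conditional mean `μ_{2,τ}(θ⁽²⁾) = e^{ν_{2,τ}}` (log link). -/
def mu2 (Y1 Y2 : ℤ → Ω → ℝ) (p k : ℕ) (θ2 : Fin (p + k + 1) → ℝ) (τ : ℤ) (ω : Ω) : ℝ :=
  Real.exp (nu2 Y1 Y2 p k θ2 τ ω)

/-- Beta-type quasi-log-likelihood summand
`Q_{1,τ}(θ⁽¹⁾) = φ₁⁻¹ [Y_{1,τ} log μ_{1,τ} + (1−Y_{1,τ}) log(1−μ_{1,τ})]`. -/
def Q1 (Y1 Y2 : ℤ → Ω → ℝ) (r s : ℕ) (φ1 : ℝ) (θ1 : Fin (r + s + 1) → ℝ) (τ : ℤ) (ω : Ω) : ℝ :=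
  φ1⁻¹ * (Y1 τ ω * Real.log (mu1 Y1 Y2 r s θ1 τ ω)
    + (1 - Y1 τ ω) * Real.log (1 - mu1 Y1 Y2 r s θ1 τ ω))

/-- Double-Poisson-type quasi-log-likelihood summand
`Q_{2,τ}(θ⁽²⁾) = φ₂⁻¹ [Y_{2,τ} log μ_{2,τ} − μ_{2,τ}]`. -/
def Q2 (Y1 Y2 : ℤ → Ω → ℝ) (p k : ℕ) (φ2 : ℝ) (θ2 : Fin (p + k + 1) → ℝ) (τ : ℤ) (ω : Ω) : ℝ :=
  φ2⁻¹ * (Y2 τ ω * Real.log (mu2 Y1 Y2 p k θ2 τ ω) - mu2 Y1 Y2 p k θ2 τ ω)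

/-!
On the compact parameter set the coefficients are bounded, `‖θ⁽ⁱ⁾‖ ≤ Bᵢ`, so the linear
predictors satisfy `|ν_{i,t}(θ)| ≤ Bᵢ ∑_j |X_{i,t,j}|` uniformly in `θ`. Through the logit,
`Y₁ log μ₁ + (1 - Y₁) log (1 - μ₁) = Y₁ ν₁ - log (1 + e^{ν₁})`, and `log (1 + e^ν) ≤ log 2 + |ν|`,
so `|Q₁| ≤ |φ₁|⁻¹ (2 B₁ ∑|X₁| + log 2)`; likewise `|Q₂| ≤ |φ₂|⁻¹ (B₂ Y₂ ∑|X₂| + sup_θ e^{ν₂})`.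
The regressors are `T₁` and `T₂` of lagged observations with `0 ≤ T₂(y) ≤ y`, and stationarity
carries the moment conditions at time `t` over to the lags, so this dominating function is
integrable. The supremum is measurable because, being continuous in `θ`, it is a supremum over a
countable dense set of parameters.
-/

open ProbabilityTheory Set

section Development

variable {mΩ : MeasurableSpace Ω}

theorem identDistrib_of_shift_invariant {β : Type*} [MeasurableSpace β] {P : Measure Ω}
    {Z : ℤ → Ω → β} (hZ : ∀ n, Measurable (Z n))
    (hstat : ∀ h : ℤ,
      Measure.map (fun ω n => Z (n + h) ω) P = Measure.map (fun ω n => Z n ω) P)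
    (t τ : ℤ) : IdentDistrib (Z t) (Z τ) P P where
  aemeasurable_fst := (hZ t).aemeasurable
  aemeasurable_snd := (hZ τ).aemeasurable
  map_eq := by
    have h := congrArg (Measure.map (fun g : ℤ → β => g τ)) (hstat (t - τ))
    rw [Measure.map_map (measurable_pi_apply τ)
        (measurable_pi_lambda _ fun n => hZ (n + (t - τ))),
      Measure.map_map (measurable_pi_apply τ) (measurable_pi_lambda _ hZ)] at h
    simpa [Function.comp_def] using h

theorem integrable_iSup_abs_of_continuous_of_le {α : Type*} [TopologicalSpace α]
    [TopologicalSpace.SeparableSpace α] {P : Measure Ω} {f : α → Ω → ℝ} {g : Ω → ℝ}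
    (hmeas : ∀ a, Measurable (f a)) (hcont : ∀ ω, Continuous fun a => f a ω)
    (hg : Integrable g P) (hfg : ∀ a ω, |f a ω| ≤ g ω) :
    Integrable (fun ω => ⨆ a, |f a ω|) P := by
  rcases isEmpty_or_nonempty α with hα | hα
  · simp [Real.iSup_of_isEmpty]
  obtain ⟨D, hDcount, hDdense⟩ := TopologicalSpace.exists_countable_dense α
  have : Countable D := hDcount.to_subtype
  have hD : (fun ω => ⨆ a, |f a ω|) = fun ω => ⨆ d : D, |f d ω| :=
    funext fun ω => (hDdense.ciSup' (hcont ω).abs).symm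
  have hsup_meas : Measurable fun ω => ⨆ a, |f a ω| :=
    hD ▸ Measurable.iSup fun d => (hmeas d).abs
  refine hg.mono' hsup_meas.aestronglyMeasurable (ae_of_all _ fun ω => ?_)
  rw [Real.norm_of_nonneg (Real.iSup_nonneg fun _ => abs_nonneg _)]
  exact ciSup_le fun a => hfg a ω

theorem measurable_T1 : Measurable T1 :=
  (measurable_id.div (measurable_const.sub measurable_id)).log

theorem measurable_T2 : Measurable T2 :=
  (measurable_const.add measurable_id).log

theorem abs_T2_le {y : ℝ} (hy : 0 ≤ y) : |T2 y| ≤ y := by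
  rw [T2, abs_of_nonneg (Real.log_nonneg (by linarith))]
  simpa using Real.log_le_sub_one_of_pos (x := 1 + y) (by linarith)

theorem integrable_abs_T2 {P : Measure Ω} {f : Ω → ℝ} (hf : Integrable f P) (hfm : Measurable f)
    (hf0 : ∀ ω, 0 ≤ f ω) : Integrable (fun ω => |T2 (f ω)|) P :=
  hf.mono' (measurable_T2.comp hfm).abs.aestronglyMeasurable
    (ae_of_all _ fun ω => by simpa using abs_T2_le (hf0 ω))

theorem abs_sum_mul_le_norm_mul_sum_abs {ι : Type*} [Fintype ι] (θ x : ι → ℝ) :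
    |∑ j, θ j * x j| ≤ ‖θ‖ * ∑ j, |x j| :=
  calc |∑ j, θ j * x j| ≤ ∑ j, |θ j| * |x j| := by
        simpa only [abs_mul] using Finset.abs_sum_le_sum_abs (fun j => θ j * x j) Finset.univ
    _ ≤ ∑ j, ‖θ‖ * |x j| := by gcongr with j; exact norm_le_pi_norm θ j
    _ = ‖θ‖ * ∑ j, |x j| := (Finset.mul_sum _ _ _).symm

theorem log_one_add_exp_le (ν : ℝ) : Real.log (1 + Real.exp ν) ≤ Real.log 2 + |ν| :=
  calc Real.log (1 + Real.exp ν) ≤ Real.log (2 * Real.exp |ν|) := by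
        gcongr
        linarith [Real.one_le_exp (abs_nonneg ν), Real.exp_le_exp.mpr (le_abs_self ν)]
    _ = Real.log 2 + |ν| := by rw [Real.log_mul two_ne_zero (Real.exp_pos _).ne', Real.log_exp]

theorem abs_mul_sub_log_one_add_exp_le {y : ℝ} (hy : y ∈ Icc 0 1) (ν : ℝ) :
    |y * ν - Real.log (1 + Real.exp ν)| ≤ 2 * |ν| + Real.log 2 := by
  have hlog_nonneg : 0 ≤ Real.log (1 + Real.exp ν) :=
    Real.log_nonneg (by linarith [Real.exp_pos ν])
  have hyν : |y * ν| ≤ |ν| := by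
    rw [abs_mul, abs_of_nonneg hy.1]
    exact mul_le_of_le_one_left (abs_nonneg ν) hy.2
  calc |y * ν - Real.log (1 + Real.exp ν)|
      ≤ |y * ν| + |Real.log (1 + Real.exp ν)| := abs_sub _ _
    _ ≤ 2 * |ν| + Real.log 2 := by
        rw [abs_of_nonneg hlog_nonneg]; linarith [log_one_add_exp_le ν]

theorem mul_log_logistic_add_mul_log_one_sub_logistic (y ν : ℝ) :
    y * Real.log (Real.exp ν / (1 + Real.exp ν))
      + (1 - y) * Real.log (1 - Real.exp ν / (1 + Real.exp ν))
      = y * ν - Real.log (1 + Real.exp ν) := by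
  have hpos : 0 < 1 + Real.exp ν := by positivity
  rw [Real.log_div (Real.exp_pos ν).ne' hpos.ne',
    show 1 - Real.exp ν / (1 + Real.exp ν) = (1 + Real.exp ν)⁻¹ by field_simp; ring,
    Real.log_inv, Real.log_exp]
  ring

section Model

variable (Y1 Y2 : ℤ → Ω → ℝ)

theorem Q1_eq (r s : ℕ) (φ1 : ℝ) (θ1 : Fin (r + s + 1) → ℝ) (τ : ℤ) (ω : Ω) :
    Q1 Y1 Y2 r s φ1 θ1 τ ω = φ1⁻¹ * (Y1 τ ω * nu1 Y1 Y2 r s θ1 τ ω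
      - Real.log (1 + Real.exp (nu1 Y1 Y2 r s θ1 τ ω))) := by
  rw [Q1, mu1, mul_log_logistic_add_mul_log_one_sub_logistic]

theorem Q2_eq (p k : ℕ) (φ2 : ℝ) (θ2 : Fin (p + k + 1) → ℝ) (τ : ℤ) (ω : Ω) :
    Q2 Y1 Y2 p k φ2 θ2 τ ω = φ2⁻¹ * (Y2 τ ω * nu2 Y1 Y2 p k θ2 τ ω
      - Real.exp (nu2 Y1 Y2 p k θ2 τ ω)) := by
  rw [Q2, mu2, Real.log_exp]

theorem abs_Q1_le (r s : ℕ) (φ1 : ℝ) (θ1 : Fin (r + s + 1) → ℝ) (τ : ℤ) (ω : Ω) {B : ℝ}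
    (hθ1 : ‖θ1‖ ≤ B) (hY1 : Y1 τ ω ∈ Icc 0 1) :
    |Q1 Y1 Y2 r s φ1 θ1 τ ω|
      ≤ |φ1|⁻¹ * (2 * (B * ∑ j, |X1 Y1 Y2 r s τ ω j|) + Real.log 2) := by
  rw [Q1_eq, abs_mul, abs_inv]
  gcongr
  refine (abs_mul_sub_log_one_add_exp_le hY1 _).trans ?_
  gcongr
  exact (abs_sum_mul_le_norm_mul_sum_abs _ _).trans (by gcongr)

theorem abs_Q2_le (p k : ℕ) (φ2 : ℝ) (θ2 : Fin (p + k + 1) → ℝ) (τ : ℤ) (ω : Ω) {B M : ℝ}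
    (hθ2 : ‖θ2‖ ≤ B) (hM : Real.exp (nu2 Y1 Y2 p k θ2 τ ω) ≤ M) (hY2 : 0 ≤ Y2 τ ω) :
    |Q2 Y1 Y2 p k φ2 θ2 τ ω|
      ≤ |φ2|⁻¹ * (B * (Y2 τ ω * ∑ j, |X2 Y1 Y2 p k τ ω j|) + M) := by
  rw [Q2_eq, abs_mul, abs_inv]
  gcongr
  calc |Y2 τ ω * nu2 Y1 Y2 p k θ2 τ ω - Real.exp (nu2 Y1 Y2 p k θ2 τ ω)|
      ≤ Y2 τ ω * |nu2 Y1 Y2 p k θ2 τ ω| + Real.exp (nu2 Y1 Y2 p k θ2 τ ω) := by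
        simpa [abs_mul, abs_of_nonneg hY2] using abs_sub (Y2 τ ω * nu2 Y1 Y2 p k θ2 τ ω)
          (Real.exp (nu2 Y1 Y2 p k θ2 τ ω))
    _ ≤ _ := by
        rw [mul_left_comm]
        gcongr
        exact (abs_sum_mul_le_norm_mul_sum_abs _ _).trans (by gcongr)

theorem continuous_nu1 (r s : ℕ) (τ : ℤ) (ω : Ω) :
    Continuous fun θ1 => nu1 Y1 Y2 r s θ1 τ ω := by
  unfold nu1; fun_prop

theorem continuous_nu2 (p k : ℕ) (τ : ℤ) (ω : Ω) :
    Continuous fun θ2 => nu2 Y1 Y2 p k θ2 τ ω := by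
  unfold nu2; fun_prop

theorem continuous_Q1 (r s : ℕ) (φ1 : ℝ) (τ : ℤ) (ω : Ω) :
    Continuous fun θ1 => Q1 Y1 Y2 r s φ1 θ1 τ ω := by
  simp only [Q1_eq]
  have := continuous_nu1 Y1 Y2 r s τ ω
  exact continuous_const.mul ((continuous_const.mul this).sub
    ((continuous_const.add (Real.continuous_exp.comp this)).log
      fun _ => (add_pos one_pos (Real.exp_pos _)).ne'))

theorem continuous_Q2 (p k : ℕ) (φ2 : ℝ) (τ : ℤ) (ω : Ω) :
    Continuous fun θ2 => Q2 Y1 Y2 p k φ2 θ2 τ ω := by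
  simp only [Q2_eq]
  have := continuous_nu2 Y1 Y2 p k τ ω
  fun_prop

theorem sum_abs_X1 (r s : ℕ) (τ : ℤ) (ω : Ω) :
    ∑ j, |X1 Y1 Y2 r s τ ω j| = 1 + ((∑ i : Fin r, |T1 (Y1 (τ - 1 - (i.val : ℤ)) ω)|)
      + ∑ l : Fin s, |T2 (Y2 (τ - 1 - (l.val : ℤ)) ω)|) := by
  simp [Fin.sum_univ_succ, X1, Fin.sum_univ_add]

theorem sum_abs_X2 (p k : ℕ) (τ : ℤ) (ω : Ω) :
    ∑ j, |X2 Y1 Y2 p k τ ω j| = 1 + ((∑ i : Fin p, |T2 (Y2 (τ - 1 - (i.val : ℤ)) ω)|)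
      + ∑ l : Fin k, |T1 (Y1 (τ - 1 - (l.val : ℤ)) ω)|) := by
  simp [Fin.sum_univ_succ, X2, Fin.sum_univ_add]

end Model

section Measurability

variable {Y1 Y2 : ℤ → Ω → ℝ} (hY1 : ∀ τ, Measurable (Y1 τ)) (hY2 : ∀ τ, Measurable (Y2 τ))
include hY1 hY2

theorem measurable_X1 (r s : ℕ) (τ : ℤ) : Measurable (X1 Y1 Y2 r s τ) := by
  refine measurable_pi_iff.mpr fun j => Fin.cases ?_ (fun i => ?_) j
  · simp [X1]
  · refine Fin.addCases (fun i => ?_) (fun l => ?_) i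
    · simp only [X1, Fin.cons_succ, Fin.append_left]
      exact measurable_T1.comp (hY1 _)
    · simp only [X1, Fin.cons_succ, Fin.append_right]
      exact measurable_T2.comp (hY2 _)

theorem measurable_X2 (p k : ℕ) (τ : ℤ) : Measurable (X2 Y1 Y2 p k τ) := by
  refine measurable_pi_iff.mpr fun j => Fin.cases ?_ (fun i => ?_) j
  · simp [X2]
  · refine Fin.addCases (fun i => ?_) (fun l => ?_) i
    · simp only [X2, Fin.cons_succ, Fin.append_left]
      exact measurable_T2.comp (hY2 _)
    · simp only [X2, Fin.cons_succ, Fin.append_right]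
      exact measurable_T1.comp (hY1 _)

theorem measurable_Q1 (r s : ℕ) (φ1 : ℝ) (θ1 : Fin (r + s + 1) → ℝ) (τ : ℤ) :
    Measurable fun ω => Q1 Y1 Y2 r s φ1 θ1 τ ω := by
  have hX := measurable_X1 hY1 hY2 r s τ
  have hτ := hY1 τ
  simp only [Q1_eq, nu1]
  fun_prop

theorem measurable_Q2 (p k : ℕ) (φ2 : ℝ) (θ2 : Fin (p + k + 1) → ℝ) (τ : ℤ) :
    Measurable fun ω => Q2 Y1 Y2 p k φ2 θ2 τ ω := by
  have hX := measurable_X2 hY1 hY2 p k τ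
  have hτ := hY2 τ
  simp only [Q2_eq, nu2]
  fun_prop

end Measurability

section Integrability

variable {Y1 Y2 : ℤ → Ω → ℝ} {P : Measure Ω} (hY2 : ∀ τ, Measurable (Y2 τ))
  (hY2nonneg : ∀ τ ω, 0 ≤ Y2 τ ω)
include hY2 hY2nonneg

theorem integrable_sum_abs_X1 [IsFiniteMeasure P]
    (hY2int : ∀ τ, Integrable (Y2 τ) P) (hT1int : ∀ τ, Integrable (fun ω => |T1 (Y1 τ ω)|) P)
    (r s : ℕ) (τ : ℤ) : Integrable (fun ω => ∑ j, |X1 Y1 Y2 r s τ ω j|) P := by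
  simp_rw [sum_abs_X1]
  exact (integrable_const 1).add ((integrable_finsetSum _ fun i _ => hT1int _).add
    (integrable_finsetSum _ fun l _ => integrable_abs_T2 (hY2int _) (hY2 _) (hY2nonneg _)))

theorem integrable_mul_sum_abs_X2 {p k : ℕ} {t : ℤ}
    (hY2int : Integrable (Y2 t) P)
    (hm2 : ∀ i : Fin p, Integrable (fun ω => Y2 t ω * Y2 (t - 1 - (i.val : ℤ)) ω) P)
    (hm4 : ∀ l : Fin k, Integrable (fun ω => Y2 t ω * |T1 (Y1 (t - 1 - (l.val : ℤ)) ω)|) P) :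
    Integrable (fun ω => Y2 t ω * ∑ j, |X2 Y1 Y2 p k t ω j|) P := by
  simp_rw [sum_abs_X2, mul_add, Finset.mul_sum, mul_one]
  refine hY2int.add ((integrable_finsetSum _ fun i _ => (hm2 i).mono' ?_ ?_).add
    (integrable_finsetSum _ fun l _ => hm4 l))
  · exact ((hY2 t).mul (measurable_T2.comp (hY2 _)).abs).aestronglyMeasurable
  · refine ae_of_all _ fun ω => ?_
    rw [Real.norm_of_nonneg (mul_nonneg (hY2nonneg _ _) (abs_nonneg _))]
    exact mul_le_mul_of_nonneg_left (abs_T2_le (hY2nonneg _ _)) (hY2nonneg _ _)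

end Integrability

end Development

theorem assumptionC1_holds_general
    {mΩ : MeasurableSpace Ω} (P : Measure Ω) [IsProbabilityMeasure P]
    (Y1 Y2 : ℤ → Ω → ℝ)
    (hY1meas : ∀ τ, Measurable (Y1 τ)) (hY2meas : ∀ τ, Measurable (Y2 τ))
    (hY1mem : ∀ τ ω, Y1 τ ω ∈ Set.Ioo (0 : ℝ) 1) (hY2nonneg : ∀ τ ω, 0 ≤ Y2 τ ω)
    -- strict stationarity of the bivariate process
    (hstat : ∀ h : ℤ,
      Measure.map (fun ω => fun n : ℤ => (Y1 (n + h) ω, Y2 (n + h) ω)) P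
        = Measure.map (fun ω => fun n : ℤ => (Y1 n ω, Y2 n ω)) P)
    (r s p k : ℕ) (φ1 φ2 : ℝ)
    (Θ1 : Set (Fin (r + s + 1) → ℝ)) (Θ2 : Set (Fin (p + k + 1) → ℝ))
    -- Assumption B1: compactness of Θ = Θ₁ × Θ₂
    (hΘ1 : IsCompact Θ1) (hΘ2 : IsCompact Θ2)
    (t : ℤ)
    -- moment conditions
    (hm1 : Integrable (fun ω => (Y2 t ω) ^ 2) P)
    (hm2 : ∀ i : Fin p, Integrable (fun ω => Y2 t ω * Y2 (t - 1 - (i.val : ℤ)) ω) P)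
    (hm3 : Integrable (fun ω => |T1 (Y1 t ω)|) P)
    (hm4 : ∀ l : Fin k, Integrable (fun ω => Y2 t ω * |T1 (Y1 (t - 1 - (l.val : ℤ)) ω)|) P)
    (hm5 : Integrable (fun ω => ⨆ θ2 : Θ2, Real.exp (nu2 Y1 Y2 p k θ2.val t ω)) P) :
    Integrable (fun ω =>
      ⨆ θ : (Θ1 ×ˢ Θ2 : Set ((Fin (r + s + 1) → ℝ) × (Fin (p + k + 1) → ℝ))),
        |Q1 Y1 Y2 r s φ1 θ.val.1 t ω + Q2 Y1 Y2 p k φ2 θ.val.2 t ω|) P := by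
  have hlag : ∀ F : ℝ × ℝ → ℝ, Measurable F → Integrable (fun ω => F (Y1 t ω, Y2 t ω)) P →
      ∀ τ, Integrable (fun ω => F (Y1 τ ω, Y2 τ ω)) P := fun F hF hint τ =>
    ((identDistrib_of_shift_invariant (fun n => (hY1meas n).prodMk (hY2meas n)) hstat t τ).comp
      hF).integrable_snd hint
  have hY2int : ∀ τ, Integrable (Y2 τ) P := hlag Prod.snd measurable_snd
    (((memLp_two_iff_integrable_sq (hY2meas t).aestronglyMeasurable).mpr hm1).integrable
      one_le_two)
  have hT1int : ∀ τ, Integrable (fun ω => |T1 (Y1 τ ω)|) P :=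
    hlag (fun y => |T1 y.1|) (measurable_T1.comp measurable_fst).abs hm3
  obtain ⟨B1, hB1⟩ := hΘ1.isBounded.exists_norm_le
  obtain ⟨B2, hB2⟩ := hΘ2.isBounded.exists_norm_le
  have : CompactSpace Θ2 := isCompact_iff_compactSpace.mp hΘ2
  have hM : ∀ ω, BddAbove (range fun θ2 : Θ2 => Real.exp (nu2 Y1 Y2 p k θ2.val t ω)) :=
    fun ω => (isCompact_range (Real.continuous_exp.comp
      ((continuous_nu2 Y1 Y2 p k t ω).comp continuous_subtype_val))).bddAbove
  refine integrable_iSup_abs_of_continuous_of_le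
    (fun θ => (measurable_Q1 hY1meas hY2meas r s φ1 θ.val.1 t).add
      (measurable_Q2 hY1meas hY2meas p k φ2 θ.val.2 t))
    (fun ω =>
      ((continuous_Q1 Y1 Y2 r s φ1 t ω).comp (continuous_fst.comp continuous_subtype_val)).add
        ((continuous_Q2 Y1 Y2 p k φ2 t ω).comp (continuous_snd.comp continuous_subtype_val)))
    ((((((integrable_sum_abs_X1 hY2meas hY2nonneg hY2int hT1int r s t).const_mul B1).const_mul
      2).add (integrable_const (Real.log 2))).const_mul |φ1|⁻¹).add
      ((((integrable_mul_sum_abs_X2 hY2meas hY2nonneg (hY2int t) hm2 hm4).const_mul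
        B2).add hm5).const_mul |φ2|⁻¹)) ?_
  rintro ⟨⟨θ1, θ2⟩, hθ1, hθ2⟩ ω
  exact (abs_add_le _ _).trans (add_le_add
    (abs_Q1_le Y1 Y2 r s φ1 θ1 t ω (hB1 θ1 hθ1) (Ioo_subset_Icc_self (hY1mem t ω)))
    (abs_Q2_le Y1 Y2 p k φ2 θ2 t ω (hB2 θ2 hθ2) (le_ciSup (hM ω) ⟨θ2, hθ2⟩) (hY2nonneg t ω)))

/-- **Proposition 3 (C1 part).** Under compactness of `Θ = Θ₁ × Θ₂` (Assumption B1) and the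
explicit moment conditions, `E[ sup_{θ∈Θ} |Q_{1,t}(θ⁽¹⁾) + Q_{2,t}(θ⁽²⁾)| ] < ∞`, i.e.
Assumption C1 holds for the beta/double-Poisson quasi-likelihoods. -/
theorem assumptionC1_holds
    {mΩ : MeasurableSpace Ω} (P : Measure Ω) [IsProbabilityMeasure P]
    (Y1 Y2 : ℤ → Ω → ℝ)
    (hY1meas : ∀ τ, Measurable (Y1 τ)) (hY2meas : ∀ τ, Measurable (Y2 τ))
    (hY1mem : ∀ τ ω, Y1 τ ω ∈ Set.Ioo (0 : ℝ) 1) (hY2nonneg : ∀ τ ω, 0 ≤ Y2 τ ω)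
    -- strict stationarity of the bivariate process
    (hstat : ∀ h : ℤ,
      Measure.map (fun ω => fun n : ℤ => (Y1 (n + h) ω, Y2 (n + h) ω)) P
        = Measure.map (fun ω => fun n : ℤ => (Y1 n ω, Y2 n ω)) P)
    (r s p k : ℕ) (φ1 φ2 : ℝ) (hφ1 : 0 < φ1) (hφ2 : 0 < φ2)
    (Θ1 : Set (Fin (r + s + 1) → ℝ)) (Θ2 : Set (Fin (p + k + 1) → ℝ))
    -- Assumption B1: compactness of Θ = Θ₁ × Θ₂
    (hΘ1 : IsCompact Θ1) (hΘ2 : IsCompact Θ2)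
    (t : ℤ)
    -- moment conditions
    (hm1 : Integrable (fun ω => (Y2 t ω) ^ 2) P)
    (hm2 : ∀ i : Fin p, Integrable (fun ω => Y2 t ω * Y2 (t - 1 - (i.val : ℤ)) ω) P)
    (hm3 : Integrable (fun ω => |T1 (Y1 t ω)|) P)
    (hm4 : ∀ l : Fin k, Integrable (fun ω => Y2 t ω * |T1 (Y1 (t - 1 - (l.val : ℤ)) ω)|) P)
    (hm5 : Integrable (fun ω => ⨆ θ2 : Θ2, Real.exp (nu2 Y1 Y2 p k θ2.val t ω)) P) :
    Integrable (fun ω =>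
      ⨆ θ : (Θ1 ×ˢ Θ2 : Set ((Fin (r + s + 1) → ℝ) × (Fin (p + k + 1) → ℝ))),
        |Q1 Y1 Y2 r s φ1 θ.val.1 t ω + Q2 Y1 Y2 p k φ2 θ.val.2 t ω|) P :=
  assumptionC1_holds_general (mΩ := mΩ) P Y1 Y2 hY1meas hY2meas hY1mem hY2nonneg hstat r s p k φ1 φ2
    Θ1 Θ2 hΘ1 hΘ2 t hm1 hm2 hm3 hm4 hm5

end MixTSQL
end
end
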